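/- For every s ∈ (0, 1/4) one has (V_0^2 ∘ H_0^2)(s, s + 3/4) = (1/2 − s, 3/4 − s), and for every t ∈ (1/4, 1/2) one has (V_0^2 ∘ H_0^2)(t, t + 1/4) = (1/2 − t, 5/4 − t) (all coordinates taken modulo 1). Consequently V_0^2 ∘ H_0^2 maps the segment {(s, s + 3/4) : s ∈ (0, 1/4)} bijectively onto the segment {(t, t + 1/4) : t ∈ (1/4, 1/2)} and vice versa. -/

import Mathlib

/-!
On both segments the two wedge moves act as translations. For `s ∈ (0, 1/4)` the second
coordinate `s + 3/4` is at distance `1/4 - s` from `0`, so `H` moves the first coordinate to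
`1/2 - s`, which is at distance `1/2 - s` from `0`, and `V` then moves the second coordinate to
`3/4 - s`; the computation on the other segment is the same up to integer shifts. In the parameters
the composite is therefore `s ↦ 1/2 - s`, which exchanges `(0, 1/4)` and `(1/4, 1/2)`, and the
first coordinate is injective on the segments because they lie over `[0, 1)`.
-/

/- 𝕋 = ℝ/ℤ, with d_𝕋 the quotient distance (norm of the difference in AddCircle 1). -/
noncomputable section

abbrev T1 := AddCircle (1 : ℝ)

/-- The distance d_𝕋(x,y) = min{|x−y|, 1−|x−y|} on 𝕋. -/
noncomputable def dT (x y : T1) : ℝ := ‖x - y‖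

/-- Horizontal wedge flow map H_ω^τ(x₁,x₂) = (x₁ + τ·d_𝕋(x₂,ω), x₂). -/
noncomputable def Hmap (ω : T1) (τ : ℝ) (p : T1 × T1) : T1 × T1 :=
  (p.1 + (↑(τ * dT p.2 ω) : T1), p.2)

/-- Vertical wedge flow map V_ω^τ(x₁,x₂) = (x₁, x₂ + τ·d_𝕋(x₁,ω)). -/
noncomputable def Vmap (ω : T1) (τ : ℝ) (p : T1 × T1) : T1 × T1 :=
  (p.1, p.2 + (↑(τ * dT p.1 ω) : T1))

/-- The segment {(s, s + 3/4) : s ∈ (0, 1/4)} ⊆ 𝕋². -/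
def segA : Set (T1 × T1) :=
  {p | ∃ s ∈ Set.Ioo (0 : ℝ) (1/4), p = (((s : ℝ) : T1), ((s + 3/4 : ℝ) : T1))}

/-- The segment {(t, t + 1/4) : t ∈ (1/4, 1/2)} ⊆ 𝕋². -/
def segB : Set (T1 × T1) :=
  {p | ∃ t ∈ Set.Ioo (1/4 : ℝ) (1/2), p = (((t : ℝ) : T1), ((t + 1/4 : ℝ) : T1))}

open Set

lemma dT_coe_zero {x : ℝ} (n : ℤ) (h : |x - n| ≤ 1/2) : dT (x : T1) 0 = |x - n| := by
  have hshift : ((x - n : ℝ) : T1) = x := by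
    rw [AddCircle.coe_sub, sub_eq_self, AddCircle.coe_eq_zero_iff]
    exact ⟨n, by simp⟩
  rw [dT, sub_zero, ← hshift, AddCircle.norm_coe_eq_abs_iff 1 one_ne_zero]
  simpa using h

lemma Hmap_zero_coe (τ a b : ℝ) (n : ℤ) (hb : |b - n| ≤ 1/2) :
    Hmap 0 τ ((a : T1), (b : T1)) = (((a + τ * |b - n| : ℝ) : T1), (b : T1)) := by
  rw [Hmap, dT_coe_zero n hb, AddCircle.coe_add]

lemma Vmap_zero_coe (τ a b : ℝ) (n : ℤ) (ha : |a - n| ≤ 1/2) :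
    Vmap 0 τ ((a : T1), (b : T1)) = ((a : T1), ((b + τ * |a - n| : ℝ) : T1)) := by
  rw [Vmap, dT_coe_zero n ha, AddCircle.coe_add]

lemma Vmap_comp_Hmap_apply_segA {s : ℝ} (hs : s ∈ Ioo (0 : ℝ) (1/4)) :
    (Vmap 0 2 ∘ Hmap 0 2) (((s : ℝ) : T1), ((s + 3/4 : ℝ) : T1)) =
      (((1/2 - s : ℝ) : T1), ((3/4 - s : ℝ) : T1)) := by
  obtain ⟨hs0, hs1⟩ := hs
  have hH : s + 2 * |s + 3/4 - (1 : ℤ)| = 1/2 - s := by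
    rw [abs_of_nonpos (by push_cast; linarith)]; push_cast; ring
  have hV : s + 3/4 + 2 * |1/2 - s - (0 : ℤ)| = 3/4 - s + 1 := by
    rw [abs_of_nonneg (by push_cast; linarith)]; push_cast; ring
  rw [Function.comp_apply,
    Hmap_zero_coe 2 s _ 1 (by rw [abs_le]; push_cast; constructor <;> linarith), hH,
    Vmap_zero_coe 2 _ _ 0 (by rw [abs_le]; push_cast; constructor <;> linarith), hV,
    AddCircle.coe_add_period]

lemma Vmap_comp_Hmap_apply_segB {t : ℝ} (ht : t ∈ Ioo (1/4 : ℝ) (1/2)) :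
    (Vmap 0 2 ∘ Hmap 0 2) (((t : ℝ) : T1), ((t + 1/4 : ℝ) : T1)) =
      (((1/2 - t : ℝ) : T1), ((5/4 - t : ℝ) : T1)) := by
  obtain ⟨ht0, ht1⟩ := ht
  have hH : t + 2 * |t + 1/4 - (1 : ℤ)| = 1/2 - t + 1 := by
    rw [abs_of_nonpos (by push_cast; linarith)]; push_cast; ring
  have hV : t + 1/4 + 2 * |1/2 - t - (0 : ℤ)| = 5/4 - t := by
    rw [abs_of_nonneg (by push_cast; linarith)]; push_cast; ring
  rw [Function.comp_apply,
    Hmap_zero_coe 2 t _ 1 (by rw [abs_le]; push_cast; constructor <;> linarith), hH,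
    AddCircle.coe_add_period,
    Vmap_zero_coe 2 _ _ 0 (by rw [abs_le]; push_cast; constructor <;> linarith), hV]

lemma Set.BijOn.image_of_eqOn_comp {α β X Y : Type*} {F : X → Y} {p : α → X} {q : β → Y}
    {g : α → β} {I : Set α} {J : Set β} (hg : BijOn g I J) (hq : InjOn q J)
    (h : EqOn (F ∘ p) (q ∘ g) I) : BijOn F (p '' I) (q '' J) := by
  refine ⟨?_, ?_, ?_⟩
  · rintro _ ⟨s, hs, rfl⟩
    exact ⟨g s, hg.mapsTo hs, (h hs).symm⟩
  · rintro _ ⟨s, hs, rfl⟩ _ ⟨s', hs', rfl⟩ hF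
    rw [hg.injOn hs hs' (hq (hg.mapsTo hs) (hg.mapsTo hs') ((h hs).symm.trans (hF.trans (h hs'))))]
  · rintro _ ⟨t, ht, rfl⟩
    obtain ⟨s, hs, rfl⟩ := hg.surjOn ht
    exact ⟨p s, mem_image_of_mem p hs, h hs⟩

lemma bijOn_const_sub_Ioo {α : Type*} [AddCommGroup α] [PartialOrder α] [IsOrderedAddMonoid α]
    (a b c : α) : BijOn (fun x => a - x) (Ioo b c) (Ioo (a - c) (a - b)) := by
  simpa only [image_const_sub_Ioo] using
    (sub_right_injective (b := a)).injOn.bijOn_image (s := Ioo b c)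

lemma injOn_coe_prodMk {f : ℝ → T1} {I : Set ℝ} (hI : I ⊆ Ico 0 1) :
    InjOn (fun x : ℝ => ((x : T1), f x)) I := fun x hx y hy h =>
  (AddCircle.coe_eq_coe_iff_of_mem_Ico (a := 0) (by simpa using hI hx) (by simpa using hI hy)).1
    (congrArg Prod.fst h)

lemma segA_eq_image :
    segA = (fun s : ℝ => ((s : T1), ((s + 3/4 : ℝ) : T1))) '' Ioo 0 (1/4) := by
  ext; simp only [segA, mem_ofPred_eq, mem_image]
  exact exists_congr fun _ => and_congr_right fun _ => eq_comm

lemma segB_eq_image :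
    segB = (fun t : ℝ => ((t : T1), ((t + 1/4 : ℝ) : T1))) '' Ioo (1/4) (1/2) := by
  ext; simp only [segB, mem_ofPred_eq, mem_image]
  exact exists_congr fun _ => and_congr_right fun _ => eq_comm

/-- (V_0^2 ∘ H_0^2)(s, s+3/4) = (1/2−s, 3/4−s) for s ∈ (0,1/4) and
(V_0^2 ∘ H_0^2)(t, t+1/4) = (1/2−t, 5/4−t) for t ∈ (1/4,1/2); consequently V_0^2 ∘ H_0^2
maps each of the two segments bijectively onto the other. -/
theorem wedge_tau2_segments_swap :
    (∀ s ∈ Set.Ioo (0 : ℝ) (1/4),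
      (Vmap 0 2 ∘ Hmap 0 2) (((s : ℝ) : T1), ((s + 3/4 : ℝ) : T1)) =
        (((1/2 - s : ℝ) : T1), ((3/4 - s : ℝ) : T1))) ∧
    (∀ t ∈ Set.Ioo (1/4 : ℝ) (1/2),
      (Vmap 0 2 ∘ Hmap 0 2) (((t : ℝ) : T1), ((t + 1/4 : ℝ) : T1)) =
        (((1/2 - t : ℝ) : T1), ((5/4 - t : ℝ) : T1))) ∧
    Set.BijOn (Vmap 0 2 ∘ Hmap 0 2) segA segB ∧
    Set.BijOn (Vmap 0 2 ∘ Hmap 0 2) segB segA := by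
  have hAB : BijOn (fun s : ℝ => 1/2 - s) (Ioo 0 (1/4)) (Ioo (1/4) (1/2)) := by
    have h := bijOn_const_sub_Ioo (1/2 : ℝ) 0 (1/4)
    norm_num at h
    exact h
  have hBA : BijOn (fun t : ℝ => 1/2 - t) (Ioo (1/4) (1/2)) (Ioo 0 (1/4)) := by
    have h := bijOn_const_sub_Ioo (1/2 : ℝ) (1/4) (1/2)
    norm_num at h
    exact h
  refine ⟨fun _ => Vmap_comp_Hmap_apply_segA, fun _ => Vmap_comp_Hmap_apply_segB, ?_, ?_⟩
  · rw [segA_eq_image, segB_eq_image]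
    refine hAB.image_of_eqOn_comp
      (injOn_coe_prodMk fun t ht => ⟨by linarith [ht.1], by linarith [ht.2]⟩) fun s hs => ?_
    rw [Function.comp_apply, Vmap_comp_Hmap_apply_segA hs]
    congr 2; ring
  · rw [segA_eq_image, segB_eq_image]
    refine hBA.image_of_eqOn_comp
      (injOn_coe_prodMk fun s hs => ⟨hs.1.le, by linarith [hs.2]⟩) fun t ht => ?_
    rw [Function.comp_apply, Vmap_comp_Hmap_apply_segB ht]
    congr 2; ring
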